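/- Symmetry identity (n = 2 case of Theorem 2): for all natural numbers m, positive integers w₁, w₂, real q with 0 < q < 1, and real x, [w₁]_q^{m-1} ∑_{k=0}^{w₁-1} q^{w₂k} β_{m,q^{w₁}}(w₂x + (w₂/w₁)k) = [w₂]_q^{m-1} ∑_{k=0}^{w₂-1} q^{w₁k} β_{m,q^{w₂}}(w₁x + (w₁/w₂)k). -/

import Mathlib

/-- The real `q`-analogue `[z]_r = (1 - r^z)/(1 - r)` using real powers. -/
noncomputable def qReal (r z : ℝ) : ℝ := (1 - r ^ z) / (1 - r)

/-- The Carlitz `q`-Bernoulli polynomial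
`β_{n,q}(x) = ∑_{l=0}^n C(n,l) q^{lx} [x]_q^{n-l} β_l` (real `x`, real powers),
built from a sequence `β` of `q`-Bernoulli numbers. -/
noncomputable def qBernoulliPoly (q : ℝ) (β : ℕ → ℝ) (n : ℕ) (x : ℝ) : ℝ :=
  ∑ l ∈ Finset.range (n + 1), (n.choose l : ℝ) * q ^ ((l : ℝ) * x) * (qReal q x) ^ (n - l) * β l

/-- The Carlitz recurrence: `β 0 = 1` and
`q·∑_{k=0}^{n} C(n,k) q^k β k − β n = δ_{n,1}` for `n ≥ 1`. -/
def IsCarlitz (q : ℝ) (β : ℕ → ℝ) : Prop :=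
  β 0 = 1 ∧ ∀ n : ℕ, 1 ≤ n →
    q * ∑ k ∈ Finset.range (n + 1), (n.choose k : ℝ) * q ^ k * β k - β n =
      if n = 1 then 1 else 0

/-!
The Carlitz recurrence has the unique solution
`β_n = (1-q)^{-n} ∑_i C(n,i) (-1)^i (i+1)/[i+1]_q`, and for it
`β_{n,q}(x) = (1-q)^{-n} ∑_i C(n,i) (-1)^i q^{ix} (i+1)/[i+1]_q`. Both facts follow by exchanging
summations and expanding `(Q + (1 - Q))^n`; the recurrence then comes down to
`∑_i C(n,i) (-1)^i (i+1) = -δ_{n,1}` for `n ≥ 1`. Substituting the closed form into a side of the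
identity, the sum over `k` becomes a geometric sum in `q^{(i+1)w₂}`, and the side equals
`(1-q)^{1-m} ∑_i C(m,i) (-1)^i (i+1) q^{i w₁ w₂ x} (1 - q^{(i+1)w₁w₂})
  / ((1 - q^{(i+1)w₁}) (1 - q^{(i+1)w₂}))`,
which is symmetric in `w₁, w₂`.
-/

open Finset

theorem sum_choose_mul_choose_mul_bernstein {R : Type*} [CommRing R] (Q : R) {n i : ℕ}
    (hi : i ≤ n) :
    ∑ k ∈ Ico i (n + 1), (n.choose k * k.choose i : R) * Q ^ k * (1 - Q) ^ (n - k) =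
      n.choose i * Q ^ i := by
  have hterm : ∀ j ∈ range (n - i + 1),
      (n.choose (i + j) * (i + j).choose i : R) * Q ^ (i + j) * (1 - Q) ^ (n - (i + j)) =
        n.choose i * Q ^ i * (Q ^ j * (1 - Q) ^ (n - i - j) * (n - i).choose j) := by
    intro j _
    rw [← Nat.cast_mul, Nat.choose_mul le_self_add, Nat.add_sub_cancel_left,
      Nat.sub_sub]
    push_cast
    ring
  rw [sum_Ico_eq_sum_range, show n + 1 - i = n - i + 1 by omega, sum_congr rfl hterm,
    ← mul_sum, ← add_pow, add_sub_cancel, one_pow, mul_one]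

theorem sum_bernstein_mul_sum_choose {R : Type*} [CommRing R] (Q : R) (a : ℕ → R) (n : ℕ) :
    ∑ k ∈ range (n + 1), n.choose k * Q ^ k * (1 - Q) ^ (n - k) *
        ∑ i ∈ range (k + 1), k.choose i * a i =
      ∑ i ∈ range (n + 1), n.choose i * Q ^ i * a i := by
  simp_rw [mul_sum]
  rw [sum_comm' (t' := range (n + 1)) (s' := fun i => Ico i (n + 1))
    (by intro k i; simp only [mem_range, mem_Ico]; omega)]
  refine sum_congr rfl fun i hi => ?_
  rw [← sum_choose_mul_choose_mul_bernstein Q (Nat.lt_succ_iff.mp (mem_range.mp hi)), sum_mul]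
  exact sum_congr rfl fun k _ => by ring

theorem sum_range_choose_mul_neg_one_pow_mul_succ {R : Type*} [CommRing R] (m : ℕ) :
    ∑ i ∈ range (m + 2), ((m + 1).choose i : R) * ((-1) ^ i * (i + 1)) =
      -if m = 0 then 1 else 0 := by
  have hsplit := sum_choose_succ_mul (fun i _ => (-1 : R) ^ i * (i + 1)) m
  have halt := congrArg (Int.cast : ℤ → R) (Int.alternating_sum_range_choose (n := m))
  push_cast at hsplit halt
  rw [hsplit, ← sum_add_distrib, ← halt, ← sum_neg_distrib]
  exact sum_congr rfl fun i _ => by ring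

theorem one_sub_pow_ne_zero {q : ℝ} (hq0 : 0 ≤ q) (hq1 : q ≠ 1) {n : ℕ} (hn : n ≠ 0) :
    1 - q ^ n ≠ 0 :=
  sub_ne_zero.mpr fun h => hq1 ((pow_eq_one_iff_of_nonneg hq0 hn).mp h.symm)

noncomputable def carlitzCoeff (q : ℝ) (i : ℕ) : ℝ :=
  (-1) ^ i * (i + 1) * (1 - q) / (1 - q ^ (i + 1))

noncomputable def carlitzNumber (q : ℝ) (n : ℕ) : ℝ :=
  (∑ i ∈ range (n + 1), n.choose i * carlitzCoeff q i) / (1 - q) ^ n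

theorem sum_choose_mul_pow_mul_carlitzNumber {q : ℝ} (hq1 : q ≠ 1) (Q : ℝ) (n : ℕ) :
    ∑ k ∈ range (n + 1), n.choose k * Q ^ k * ((1 - Q) / (1 - q)) ^ (n - k) * carlitzNumber q k =
      (∑ i ∈ range (n + 1), n.choose i * Q ^ i * carlitzCoeff q i) / (1 - q) ^ n := by
  have hq : 1 - q ≠ 0 := sub_ne_zero.mpr hq1.symm
  rw [← sum_bernstein_mul_sum_choose, sum_div]
  refine sum_congr rfl fun k hk => ?_
  have hkn : n = k + (n - k) := by have := mem_range.mp hk; omega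
  rw [carlitzNumber, div_pow, hkn, pow_add, Nat.add_sub_cancel_left]
  field_simp

theorem qBernoulliPoly_carlitzNumber {q : ℝ} (hq0 : 0 ≤ q) (hq1 : q ≠ 1) (n : ℕ) (x : ℝ) :
    qBernoulliPoly q (carlitzNumber q) n x =
      (∑ i ∈ range (n + 1), n.choose i * (q ^ x) ^ i * carlitzCoeff q i) / (1 - q) ^ n := by
  rw [← sum_choose_mul_pow_mul_carlitzNumber hq1, qBernoulliPoly]
  refine sum_congr rfl fun l _ => ?_
  rw [mul_comm (l : ℝ), Real.rpow_mul hq0, Real.rpow_natCast, qReal]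

theorem carlitzCoeff_mul_pow_succ_sub_one {q : ℝ} (hq0 : 0 ≤ q) (hq1 : q ≠ 1) (i : ℕ) :
    carlitzCoeff q i * (q ^ (i + 1) - 1) = -(1 - q) * ((-1) ^ i * (i + 1)) := by
  have := one_sub_pow_ne_zero hq0 hq1 i.succ_ne_zero
  rw [carlitzCoeff]
  field_simp
  ring

theorem isCarlitz_carlitzNumber {q : ℝ} (hq0 : 0 ≤ q) (hq1 : q ≠ 1) :
    IsCarlitz q (carlitzNumber q) := by
  have hq : 1 - q ≠ 0 := sub_ne_zero.mpr hq1.symm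
  refine ⟨by simp [carlitzNumber, carlitzCoeff, hq], fun n hn => ?_⟩
  obtain ⟨m, rfl⟩ := Nat.exists_eq_add_of_le' hn
  have hsum := sum_choose_mul_pow_mul_carlitzNumber hq1 q (m + 1)
  simp only [div_self hq, one_pow, mul_one] at hsum
  rw [hsum, carlitzNumber, mul_div_assoc', div_sub_div_same, mul_sum, ← sum_sub_distrib]
  have hterm : ∀ i ∈ range (m + 2), q * (((m + 1).choose i : ℝ) * q ^ i * carlitzCoeff q i) -
      (m + 1).choose i * carlitzCoeff q i =
        -(1 - q) * (((m + 1).choose i : ℝ) * ((-1) ^ i * (i + 1))) := by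
    intro i _
    linear_combination ((m + 1).choose i : ℝ) * carlitzCoeff_mul_pow_succ_sub_one hq0 hq1 i
  rw [sum_congr rfl hterm, ← mul_sum, sum_range_choose_mul_neg_one_pow_mul_succ]
  rcases m with _ | m
  · simp [hq]
  · simp

theorem IsCarlitz.unique {q : ℝ} (hq0 : 0 ≤ q) (hq1 : q ≠ 1) {β β' : ℕ → ℝ}
    (h : IsCarlitz q β) (h' : IsCarlitz q β') : β = β' := by
  funext n
  induction n using Nat.strong_induction_on with
  | _ n ih =>
    rcases n with _ | m
    · rw [h.1, h'.1]
    have hlower : ∑ k ∈ range (m + 1), ((m + 1).choose k : ℝ) * q ^ k * β k =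
        ∑ k ∈ range (m + 1), ((m + 1).choose k : ℝ) * q ^ k * β' k :=
      sum_congr rfl fun k hk => by rw [ih k (mem_range.mp hk)]
    have hrec := h.2 (m + 1) m.succ_pos
    have hrec' := h'.2 (m + 1) m.succ_pos
    rw [sum_range_succ] at hrec hrec'
    simp only [Nat.choose_self, Nat.cast_one, one_mul] at hrec hrec'
    have hdiff : (q ^ (m + 2) - 1) * (β (m + 1) - β' (m + 1)) = 0 := by
      linear_combination hrec - hrec' - q * hlower
    have hne : q ^ (m + 2) - 1 ≠ 0 :=
      sub_ne_zero.mpr ((pow_eq_one_iff_of_nonneg hq0 (m + 1).succ_ne_zero).not.mpr hq1)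
    exact sub_eq_zero.mp ((mul_eq_zero.mp hdiff).resolve_left hne)

theorem IsCarlitz.eq_carlitzNumber {q : ℝ} (hq0 : 0 ≤ q) (hq1 : q ≠ 1) {β : ℕ → ℝ}
    (h : IsCarlitz q β) : β = carlitzNumber q :=
  h.unique hq0 hq1 (isCarlitz_carlitzNumber hq0 hq1)

theorem pow_rpow_mul_add_div_mul {q : ℝ} (hq : 0 < q) {w₁ : ℕ} (hw₁ : w₁ ≠ 0) (w₂ k : ℕ)
    (x : ℝ) :
    (q ^ w₁) ^ ((w₂ : ℝ) * x + ((w₂ : ℝ) / (w₁ : ℝ)) * (k : ℝ)) =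
      (q ^ x) ^ (w₁ * w₂) * (q ^ w₂) ^ k := by
  have hexp :
      (w₁ : ℝ) * (w₂ * x + w₂ / w₁ * k) = x * ((w₁ * w₂ : ℕ) : ℝ) + ((w₂ * k : ℕ) : ℝ) := by
    have : (w₁ : ℝ) ≠ 0 := Nat.cast_ne_zero.mpr hw₁
    push_cast
    field_simp
  rw [← Real.rpow_natCast q w₁, ← Real.rpow_mul hq.le, hexp, Real.rpow_add hq,
    Real.rpow_mul hq.le, Real.rpow_natCast, Real.rpow_natCast, pow_mul, pow_mul]

theorem sum_pow_mul_qBernoulliPoly_carlitzNumber {q : ℝ} (hq0 : 0 < q) (hq1 : q ≠ 1) {w₁ : ℕ}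
    (hw₁ : w₁ ≠ 0) (w₂ m : ℕ) (x : ℝ) :
    ∑ k ∈ range w₁, q ^ (w₂ * k) * qBernoulliPoly (q ^ w₁) (carlitzNumber (q ^ w₁)) m
        ((w₂ : ℝ) * x + ((w₂ : ℝ) / (w₁ : ℝ)) * (k : ℝ)) =
      (∑ i ∈ range (m + 1), m.choose i * carlitzCoeff (q ^ w₁) i * (q ^ x) ^ (i * (w₁ * w₂)) *
        ∑ k ∈ range w₁, (q ^ ((i + 1) * w₂)) ^ k) / (1 - q ^ w₁) ^ m := by
  simp_rw [qBernoulliPoly_carlitzNumber (pow_nonneg hq0.le w₁)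
    ((pow_eq_one_iff_of_nonneg hq0.le hw₁).not.mpr hq1),
    pow_rpow_mul_add_div_mul hq0 hw₁, mul_div_assoc', ← sum_div, mul_sum]
  rw [sum_comm]
  exact congrArg (· / _) (sum_congr rfl fun i _ => sum_congr rfl fun k _ => by ring)

theorem qReal_zpow_mul_sum_pow_mul_qBernoulliPoly_carlitzNumber {q : ℝ} (hq0 : 0 < q)
    (hq1 : q ≠ 1) {w₁ w₂ : ℕ} (hw₁ : w₁ ≠ 0) (hw₂ : w₂ ≠ 0) (m : ℕ) (x : ℝ) :
    (qReal q (w₁ : ℝ)) ^ ((m : ℤ) - 1) *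
        ∑ k ∈ range w₁, q ^ (w₂ * k) * qBernoulliPoly (q ^ w₁) (carlitzNumber (q ^ w₁)) m
          ((w₂ : ℝ) * x + ((w₂ : ℝ) / (w₁ : ℝ)) * (k : ℝ)) =
      (1 - q) / (1 - q) ^ m * ∑ i ∈ range (m + 1),
        m.choose i * ((-1) ^ i * (i + 1)) * (q ^ x) ^ (i * (w₁ * w₂)) *
          (1 - q ^ ((i + 1) * (w₁ * w₂))) /
            ((1 - q ^ ((i + 1) * w₁)) * (1 - q ^ ((i + 1) * w₂))) := by
  have hq : 1 - q ≠ 0 := sub_ne_zero.mpr hq1.symm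
  have hA := one_sub_pow_ne_zero hq0.le hq1 hw₁
  have hprefactor : ∀ S : ℝ,
      (1 - q ^ w₁) ^ m / (1 - q) ^ m / ((1 - q ^ w₁) / (1 - q)) * (S / (1 - q ^ w₁) ^ m) =
        (1 - q) / (1 - q) ^ m * (S / (1 - q ^ w₁)) := fun S => by field_simp
  rw [sum_pow_mul_qBernoulliPoly_carlitzNumber hq0 hq1 hw₁, qReal, Real.rpow_natCast,
    zpow_sub₀ (div_ne_zero hA hq), zpow_one, zpow_natCast, div_pow, hprefactor, sum_div]
  refine congrArg _ (sum_congr rfl fun i _ => ?_)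
  have hD₁ : 1 - q ^ ((i + 1) * w₁) ≠ 0 :=
    one_sub_pow_ne_zero hq0.le hq1 (Nat.mul_ne_zero i.succ_ne_zero hw₁)
  have hD₂ : 1 - q ^ ((i + 1) * w₂) ≠ 0 :=
    one_sub_pow_ne_zero hq0.le hq1 (Nat.mul_ne_zero i.succ_ne_zero hw₂)
  have hgeom : ∑ k ∈ range w₁, (q ^ ((i + 1) * w₂)) ^ k =
      (1 - q ^ ((i + 1) * (w₁ * w₂))) / (1 - q ^ ((i + 1) * w₂)) := by
    rw [geom_sum_eq (fun h => hD₂ (by rw [h, sub_self])), ← neg_div_neg_eq, neg_sub, neg_sub,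
      ← pow_mul, Nat.mul_right_comm (i + 1) w₂ w₁, mul_assoc]
  rw [hgeom, carlitzCoeff, ← pow_mul, mul_comm w₁ (i + 1)]
  field_simp

theorem qBernoulli_symmetry (m : ℕ) (w₁ w₂ : ℕ) (hw₁ : 0 < w₁) (hw₂ : 0 < w₂)
    (q : ℝ) (hq0 : 0 < q) (hq1 : q < 1) (x : ℝ)
    (β : ℝ → ℕ → ℝ) (hβ : ∀ r : ℝ, 0 < r → r < 1 → IsCarlitz r (β r)) :
    (qReal q (w₁ : ℝ)) ^ ((m : ℤ) - 1) *
        ∑ k ∈ Finset.range w₁,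
          q ^ (w₂ * k) *
            qBernoulliPoly (q ^ w₁) (β (q ^ w₁)) m
              ((w₂ : ℝ) * x + ((w₂ : ℝ) / (w₁ : ℝ)) * (k : ℝ)) =
      (qReal q (w₂ : ℝ)) ^ ((m : ℤ) - 1) *
        ∑ k ∈ Finset.range w₂,
          q ^ (w₁ * k) *
            qBernoulliPoly (q ^ w₂) (β (q ^ w₂)) m
              ((w₁ : ℝ) * x + ((w₁ : ℝ) / (w₂ : ℝ)) * (k : ℝ)) := by
  have hβ_eq : ∀ {w : ℕ}, 0 < w → β (q ^ w) = carlitzNumber (q ^ w) := fun hw =>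
    (hβ _ (pow_pos hq0 _) (pow_lt_one₀ hq0.le hq1 hw.ne')).eq_carlitzNumber
      (pow_nonneg hq0.le _) (pow_lt_one₀ hq0.le hq1 hw.ne').ne
  rw [hβ_eq hw₁, hβ_eq hw₂,
    qReal_zpow_mul_sum_pow_mul_qBernoulliPoly_carlitzNumber hq0 hq1.ne hw₁.ne' hw₂.ne',
    qReal_zpow_mul_sum_pow_mul_qBernoulliPoly_carlitzNumber hq0 hq1.ne hw₂.ne' hw₁.ne']
  exact congrArg _ (sum_congr rfl fun i _ => by ring)
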